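/- arXiv:1308.4718 — 11 statements merged into one kernel-verified Lean document; each statement's English description precedes it below -/
import Mathlib

section
/- Let X be an n×n real symmetric matrix. Then X = xxᵀ - yyᵀ for some x, y ∈ ℝ^n if and only if X = (1/2)(w_1 w_2ᵀ + w_2 w_1ᵀ) for some w_1, w_2 ∈ ℝ^n. -/
theorem stmt4 {n : ℕ} (X : Matrix (Fin n) (Fin n) ℝ) (hX : X.IsHermitian) :
    (∃ x y : Fin n → ℝ, X = Matrix.vecMulVec x x - Matrix.vecMulVec y y) ↔
    (∃ w₁ w₂ : Fin n → ℝ,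
      X = (1 / 2 : ℝ) • (Matrix.vecMulVec w₁ w₂ + Matrix.vecMulVec w₂ w₁)) := by
  constructor
  · rintro ⟨x, y, rfl⟩
    refine ⟨x + y, x - y, ?_⟩
    ext i j
    simp [Matrix.vecMulVec_apply]
    ring
  · rintro ⟨w₁, w₂, rfl⟩
    refine ⟨(1 / 2 : ℝ) • (w₁ + w₂), (1 / 2 : ℝ) • (w₁ - w₂), ?_⟩
    ext i j
    simp [Matrix.vecMulVec_apply]
    ring
end

section
/- Let w_1, w_2 ∈ ℝ^n and X = (1/2)(w_1 w_2ᵀ + w_2 w_1ᵀ). Then the nuclear norm of X (the sum of its singular values, equivalently the sum of the absolute values of its eigenvalues since X is symmetric) equals ‖w_1‖·‖w_2‖. -/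
/-!
Write `s = w₁ ⬝ᵥ w₂`, `qₖ = wₖ ⬝ᵥ wₖ` and `p = √(q₁ q₂)`. If `X v = λ v`, then
`2λ v = α w₁ + β w₂` with `α = w₂ ⬝ᵥ v`, `β = w₁ ⬝ᵥ v`, and pairing with `w₁`, `w₂` gives
`(2λ - s) β = q₁ α`, `(2λ - s) α = q₂ β`; hence `λ ((2λ - s)² - p²) = 0`, i.e. `λ ∈ {0, (s ± p) / 2}`.
By Cauchy–Schwarz `|s| ≤ p`, so in all three cases `|λ| p = λ (2λ - s)`. Summing, with
`tr X = s` and `tr X² = (s² + p²) / 2`, gives `p ∑ |λ| = 2 tr X² - s tr X = p²`.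
-/

open Matrix

namespace Matrix.IsHermitian

variable {𝕜 ι : Type*} [RCLike 𝕜] [Fintype ι] [DecidableEq ι] {A : Matrix ι ι 𝕜}

theorem trace_pow_eq_sum_eigenvalues_pow (hA : A.IsHermitian) (k : ℕ) :
    (A ^ k).trace = ∑ i, (hA.eigenvalues i : 𝕜) ^ k := by
  conv_lhs => rw [hA.spectral_theorem, ← map_pow, Unitary.conjStarAlgAut_apply, trace_mul_cycle,
    Unitary.coe_star_mul_self, one_mul, diagonal_pow, trace_diagonal]
  rfl

end Matrix.IsHermitian

section SymmOuter

variable {K ι : Type*} [Field K] [NeZero (2 : K)] [Fintype ι] (w₁ w₂ : ι → K)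

def symmOuter : Matrix ι ι K := (1 / 2 : K) • (vecMulVec w₁ w₂ + vecMulVec w₂ w₁)

theorem trace_symmOuter : (symmOuter w₁ w₂).trace = w₁ ⬝ᵥ w₂ := by
  rw [symmOuter, trace_smul, trace_add, trace_vecMulVec, trace_vecMulVec, dotProduct_comm w₂,
    smul_eq_mul]
  field_simp
  ring

theorem trace_symmOuter_sq [DecidableEq ι] :
    (symmOuter w₁ w₂ ^ 2).trace = ((w₁ ⬝ᵥ w₂) ^ 2 + (w₁ ⬝ᵥ w₁) * (w₂ ⬝ᵥ w₂)) / 2 := by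
  simp only [symmOuter, sq, smul_mul_smul_comm, add_mul, mul_add, vecMulVec_mul_vecMulVec,
    trace_smul, trace_add, trace_vecMulVec, dotProduct_smul, smul_eq_mul, dotProduct_comm w₂ w₁]
  field_simp
  ring

theorem symmOuter_eigenvalue_mul_eq_zero {μ : K} {v : ι → K} (hv : v ≠ 0)
    (h : symmOuter w₁ w₂ *ᵥ v = μ • v) :
    μ * ((2 * μ - w₁ ⬝ᵥ w₂) ^ 2 - (w₁ ⬝ᵥ w₁) * (w₂ ⬝ᵥ w₂)) = 0 := by
  set s := w₁ ⬝ᵥ w₂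
  set c := (2 * μ - s) ^ 2 - (w₁ ⬝ᵥ w₁) * (w₂ ⬝ᵥ w₂)
  set α := w₂ ⬝ᵥ v
  set β := w₁ ⬝ᵥ v
  have hμv : (2 * μ) • v = α • w₁ + β • w₂ := by
    rw [mul_smul, ← h, symmOuter, smul_mulVec, add_mulVec, vecMulVec_mulVec, vecMulVec_mulVec,
      smul_smul, one_div, mul_inv_cancel₀ two_ne_zero, one_smul,
      op_smul_eq_smul, op_smul_eq_smul]
  have h₁ : (2 * μ - s) * β = α * (w₁ ⬝ᵥ w₁) := by
    have := congrArg (w₁ ⬝ᵥ ·) hμv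
    simp only [dotProduct_smul, dotProduct_add, smul_eq_mul] at this
    linear_combination this
  have h₂ : (2 * μ - s) * α = β * (w₂ ⬝ᵥ w₂) := by
    have := congrArg (w₂ ⬝ᵥ ·) hμv
    simp only [dotProduct_smul, dotProduct_add, smul_eq_mul, dotProduct_comm w₂ w₁] at this
    linear_combination this
  have hcα : c * α = 0 := by linear_combination (2 * μ - s) * h₂ + (w₂ ⬝ᵥ w₂) * h₁
  have hcβ : c * β = 0 := by linear_combination (2 * μ - s) * h₁ + (w₁ ⬝ᵥ w₁) * h₂
  have : (2 * (μ * c)) • v = 0 := by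
    rw [show 2 * (μ * c) = c * (2 * μ) by ring, mul_smul, hμv, smul_add, smul_smul, smul_smul,
      hcα, hcβ, zero_smul, zero_smul, add_zero]
  simpa [hv, two_ne_zero] using this

end SymmOuter

theorem abs_mul_eq_mul_two_mul_sub {e s p : ℝ} (hsp : |s| ≤ p)
    (h : e * ((2 * e - s) ^ 2 - p ^ 2) = 0) : |e| * p = e * (2 * e - s) := by
  have hroots : e = 0 ∨ 2 * e - s = p ∨ 2 * e - s = -p := by
    rcases mul_eq_zero.mp h with he | hsq
    · exact .inl he
    · exact .inr (sq_eq_sq_iff_eq_or_eq_neg.mp (sub_eq_zero.mp hsq))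
  obtain ⟨hs_lo, hs_hi⟩ := abs_le.mp hsp
  rcases hroots with he | he | he
  · simp [he]
  · rw [abs_of_nonneg (by linarith), he]
  · rw [abs_of_nonpos (by linarith), he, mul_neg, neg_mul]

theorem sum_abs_eq_of_sum_eq_of_sum_sq_eq {ι : Type*} [Fintype ι] {e : ι → ℝ} {s p : ℝ}
    (hsp : |s| ≤ p) (he : ∀ i, e i * ((2 * e i - s) ^ 2 - p ^ 2) = 0)
    (hsum : ∑ i, e i = s) (hsum_sq : ∑ i, e i ^ 2 = (s ^ 2 + p ^ 2) / 2) :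
    ∑ i, |e i| = p := by
  have hp : 0 ≤ p := (abs_nonneg s).trans hsp
  rcases hp.lt_or_eq with hp | rfl
  · refine mul_right_cancel₀ hp.ne' ?_
    calc (∑ i, |e i|) * p = ∑ i, e i * (2 * e i - s) := by
          rw [Finset.sum_mul]
          exact Finset.sum_congr rfl fun i _ => abs_mul_eq_mul_two_mul_sub hsp (he i)
      _ = 2 * ∑ i, e i ^ 2 - s * ∑ i, e i := by
          simp only [mul_sub, Finset.sum_sub_distrib, Finset.mul_sum]
          congr 1 <;> exact Finset.sum_congr rfl fun i _ => by ring
      _ = p * p := by rw [hsum, hsum_sq]; ring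
  · have hs : s = 0 := abs_nonpos_iff.mp hsp
    have hzero : ∀ i ∈ Finset.univ, e i ^ 2 = 0 :=
      (Finset.sum_eq_zero_iff_of_nonneg fun i _ => sq_nonneg (e i)).mp (by simp [hsum_sq, hs])
    exact Finset.sum_eq_zero fun i hi => by simpa using hzero i hi

theorem stmt6 {n : ℕ} (w₁ w₂ : Fin n → ℝ)
    (X : Matrix (Fin n) (Fin n) ℝ)
    (hXdef : X = (1 / 2 : ℝ) • (Matrix.vecMulVec w₁ w₂ + Matrix.vecMulVec w₂ w₁))
    (hX : X.IsHermitian) :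
    ∑ i, abs (hX.eigenvalues i) =
      Real.sqrt (∑ i, w₁ i ^ 2) * Real.sqrt (∑ i, w₂ i ^ 2) := by
  have hsq (w : Fin n → ℝ) : ∑ i, w i ^ 2 = w ⬝ᵥ w := by simp only [dotProduct, sq]
  have hp : (√(∑ i, w₁ i ^ 2) * √(∑ i, w₂ i ^ 2)) ^ 2 = (w₁ ⬝ᵥ w₁) * (w₂ ⬝ᵥ w₂) := by
    rw [mul_pow, Real.sq_sqrt (by positivity), Real.sq_sqrt (by positivity), hsq, hsq]
  change X = symmOuter w₁ w₂ at hXdef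
  subst hXdef
  apply sum_abs_eq_of_sum_eq_of_sum_sq_eq (s := w₁ ⬝ᵥ w₂)
  · rw [← Real.sqrt_mul (by positivity)]
    exact Real.abs_le_sqrt (Finset.sum_mul_sq_le_sq_mul_sq _ w₁ w₂)
  · intro i
    rw [hp]
    exact symmOuter_eigenvalue_mul_eq_zero w₁ w₂ ((WithLp.ofLp_eq_zero 2).not.mpr
      (hX.eigenvectorBasis.orthonormal.ne_zero i)) (hX.mulVec_eigenvectorBasis i)
  · simpa using hX.trace_eq_sum_eigenvalues.symm.trans (trace_symmOuter w₁ w₂)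
  · rw [hp]
    simpa using (hX.trace_pow_eq_sum_eigenvalues_pow 2).symm.trans (trace_symmOuter_sq w₁ w₂)
end

section
/- Let F = {f_1,...,f_m} ⊂ ℝ^n and define a_0 = min over unit vectors x, y of Σ_{j=1}^m |⟨x,f_j⟩|²|⟨y,f_j⟩|². Then the map x ↦ (|⟨x,f_1⟩|,...,|⟨x,f_m⟩|) is injective on ℝ^n up to sign (i.e., equal magnitudes of all coefficients imply x = ±y) if and only if a_0 > 0. -/
open scoped RealInnerProductSpace BigOperators

theorem stmt10 {n m : ℕ} (f : Fin m → EuclideanSpace ℝ (Fin n)) (a₀ : ℝ)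
    (ha₀ : IsLeast {s : ℝ | ∃ x y : EuclideanSpace ℝ (Fin n), ‖x‖ = 1 ∧ ‖y‖ = 1 ∧
      s = ∑ j, abs (⟪x, f j⟫) ^ 2 * abs (⟪y, f j⟫) ^ 2} a₀) :
    (∀ x y : EuclideanSpace ℝ (Fin n),
        (∀ j, abs (⟪x, f j⟫) = abs (⟪y, f j⟫)) → x = y ∨ x = -y) ↔ 0 < a₀ := by
  constructor
  · intro hinj
    obtain ⟨⟨x, y, hx, hy, hsum⟩, hlb⟩ := ha₀
    have hnonneg : (0:ℝ) ≤ a₀ := by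
      rw [hsum]
      exact Finset.sum_nonneg fun j _ => mul_nonneg (sq_nonneg _) (sq_nonneg _)
    rcases hnonneg.lt_or_eq with h | h
    · exact h
    · exfalso
      -- a₀ = 0 : each term vanishes
      have hzero : ∀ j, ⟪x, f j⟫ = 0 ∨ ⟪y, f j⟫ = 0 := by
        intro j
        have hterms : ∀ j ∈ Finset.univ, (0:ℝ) ≤ abs (⟪x, f j⟫) ^ 2 * abs (⟪y, f j⟫) ^ 2 :=
          fun j _ => mul_nonneg (sq_nonneg _) (sq_nonneg _)
        have := (Finset.sum_eq_zero_iff_of_nonneg hterms).mp (by rw [← hsum, ← h]) j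
          (Finset.mem_univ j)
        rcases mul_eq_zero.mp this with h' | h'
        · left; exact abs_eq_zero.mp (pow_eq_zero_iff (by norm_num) |>.mp h')
        · right; exact abs_eq_zero.mp (pow_eq_zero_iff (by norm_num) |>.mp h')
      have habs : ∀ j, abs (⟪x + y, f j⟫) = abs (⟪x - y, f j⟫) := by
        intro j
        rw [inner_add_left, inner_sub_left]
        rcases hzero j with h' | h' <;> rw [h'] <;> simp [abs_sub_comm]
      rcases hinj (x + y) (x - y) habs with h' | h'
      · have : y = 0 := by
          have := sub_eq_zero.mpr h'
          have h2 : y + y = 0 := by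
            abel_nf at this ⊢
            linear_combination (norm := abel_nf) this
          have : (2:ℝ) • y = 0 := by rw [two_smul]; exact h2
          simpa using (smul_eq_zero.mp this).resolve_left (by norm_num)
        rw [this] at hy; simp at hy
      · have : x = 0 := by
          have h2 : x + x = 0 := by
            have := h'
            rw [neg_sub] at this
            have h3 : (x + y) - (y - x) = 0 := sub_eq_zero.mpr this
            abel_nf at h3 ⊢
            linear_combination (norm := abel_nf) h3
          have : (2:ℝ) • x = 0 := by rw [two_smul]; exact h2
          simpa using (smul_eq_zero.mp this).resolve_left (by norm_num)
        rw [this] at hx; simp at hx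
  · intro ha x y hxy
    by_contra hcon
    push_neg at hcon
    obtain ⟨hne1, hne2⟩ := hcon
    have hu : x + y ≠ 0 := fun h => hne2 (by rw [← sub_eq_zero]; abel_nf; linear_combination (norm := abel_nf) h)
    have hv : x - y ≠ 0 := fun h => hne1 (sub_eq_zero.mp h)
    set u := ‖x + y‖⁻¹ • (x + y) with hu_def
    set v := ‖x - y‖⁻¹ • (x - y) with hv_def
    have hun : ‖u‖ = 1 := norm_smul_inv_norm hu
    have hvn : ‖v‖ = 1 := norm_smul_inv_norm hv
    have hmem : (0:ℝ) ∈ {s : ℝ | ∃ x y : EuclideanSpace ℝ (Fin n), ‖x‖ = 1 ∧ ‖y‖ = 1 ∧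
        s = ∑ j, abs (⟪x, f j⟫) ^ 2 * abs (⟪y, f j⟫) ^ 2} := by
      refine ⟨u, v, hun, hvn, ?_⟩
      symm
      apply Finset.sum_eq_zero
      intro j _
      have key : ⟪x + y, f j⟫ * ⟪x - y, f j⟫ = 0 := by
        rw [inner_add_left, inner_sub_left]
        have := hxy j
        have hsq : ⟪x, f j⟫ ^ 2 = ⟪y, f j⟫ ^ 2 := by
          rw [← sq_abs, ← sq_abs (⟪y, f j⟫), this]
        ring_nf
        linear_combination hsq
      have : ⟪u, f j⟫ * ⟪v, f j⟫ = 0 := by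
        rw [hu_def, hv_def, real_inner_smul_left, real_inner_smul_left]
        rw [mul_mul_mul_comm]
        rw [key, mul_zero]
      rcases mul_eq_zero.mp this with h' | h' <;> rw [h'] <;> simp
    have := ha₀.2 hmem
    linarith
end

section
/- Let F = {f_1,...,f_m} ⊂ ℝ^n. The map x ↦ (|⟨x,f_1⟩|,...,|⟨x,f_m⟩|) is injective up to sign on ℝ^n if and only if for every subset S ⊆ {1,...,m}, either {f_j : j ∈ S} spans ℝ^n or {f_j : j ∉ S} spans ℝ^n. -/
open scoped RealInnerProductSpace BigOperators

private lemma aux_zero {n : ℕ} {s : Set (EuclideanSpace ℝ (Fin n))}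
    (hs : Submodule.span ℝ s = ⊤) {z : EuclideanSpace ℝ (Fin n)}
    (hz : ∀ v ∈ s, ⟪z, v⟫ = 0) : z = 0 := by
  have hle : Submodule.span ℝ s ≤ (Submodule.span ℝ {z})ᗮ := by
    rw [Submodule.span_le]
    intro v hv
    exact Submodule.mem_orthogonal_singleton_iff_inner_left.2 (by
      rw [real_inner_comm]; exact hz v hv)
  rw [hs, top_le_iff] at hle
  have hz2 : z ∈ (Submodule.span ℝ {z} : Submodule ℝ (EuclideanSpace ℝ (Fin n)))ᗮ := by
    rw [hle]; trivial
  have : ⟪z, z⟫ = 0 :=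
    Submodule.inner_right_of_mem_orthogonal (Submodule.mem_span_singleton_self z) hz2
  exact inner_self_eq_zero.mp this

private lemma aux_perp {n : ℕ} {s : Set (EuclideanSpace ℝ (Fin n))}
    (hs : Submodule.span ℝ s ≠ ⊤) :
    ∃ z : EuclideanSpace ℝ (Fin n), z ≠ 0 ∧ ∀ v ∈ s, ⟪z, v⟫ = 0 := by
  have : (Submodule.span ℝ s)ᗮ ≠ ⊥ := by
    simpa [Submodule.orthogonal_eq_bot_iff] using hs
  obtain ⟨z, hzmem, hz0⟩ := Submodule.exists_mem_ne_zero_of_ne_bot this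
  exact ⟨z, hz0, fun v hv =>
    Submodule.inner_left_of_mem_orthogonal (Submodule.subset_span hv) hzmem⟩

theorem stmt11 {n m : ℕ} (f : Fin m → EuclideanSpace ℝ (Fin n)) :
    (∀ x y : EuclideanSpace ℝ (Fin n),
        (∀ j, abs (⟪x, f j⟫) = abs (⟪y, f j⟫)) → x = y ∨ x = -y) ↔
    (∀ S : Set (Fin m),
        Submodule.span ℝ (f '' S) = ⊤ ∨ Submodule.span ℝ (f '' Sᶜ) = ⊤) := by
  constructor
  · intro h S
    by_contra hc
    push_neg at hc
    obtain ⟨h1, h2⟩ := hc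
    obtain ⟨u, hu0, hu⟩ := aux_perp h1
    obtain ⟨v, hv0, hv⟩ := aux_perp h2
    have key : ∀ j, |⟪u + v, f j⟫| = |⟪u - v, f j⟫| := by
      intro j
      by_cases hj : j ∈ S
      · have : ⟪u, f j⟫ = 0 := hu _ ⟨j, hj, rfl⟩
        rw [inner_add_left, inner_sub_left, this, zero_add, zero_sub, abs_neg]
      · have : ⟪v, f j⟫ = 0 := hv _ ⟨j, hj, rfl⟩
        rw [inner_add_left, inner_sub_left, this, add_zero, sub_zero]
    rcases h (u + v) (u - v) key with h3 | h3
    · apply hv0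
      have h4 : (2 : ℝ) • v = 0 := by
        rw [two_smul]
        have : u + v - (u - v) = 0 := by rw [h3]; abel
        calc v + v = u + v - (u - v) := by abel
        _ = 0 := this
      simpa using (smul_eq_zero.mp h4).resolve_left (by norm_num)
    · apply hu0
      have h4 : (2 : ℝ) • u = 0 := by
        rw [two_smul]
        have : u + v + (u - v) = 0 := by rw [h3]; abel
        calc u + u = u + v + (u - v) := by abel
        _ = 0 := this
      simpa using (smul_eq_zero.mp h4).resolve_left (by norm_num)
  · intro h x y hxy
    set S : Set (Fin m) := {j | ⟪x + y, f j⟫ = 0} with hS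
    have hSc : ∀ j ∈ Sᶜ, ⟪x - y, f j⟫ = 0 := by
      intro j hj
      have habs := hxy j
      rcases abs_eq_abs.mp habs with h1 | h1
      · rw [inner_sub_left, h1, sub_self]
      · exfalso
        apply hj
        show ⟪x + y, f j⟫ = 0
        rw [inner_add_left, h1]; ring
    rcases h S with hsp | hsp
    · right
      have : x + y = 0 := aux_zero hsp (by
        rintro v ⟨j, hj, rfl⟩; exact hj)
      exact eq_neg_of_add_eq_zero_left this
    · left
      have : x - y = 0 := aux_zero hsp (by
        rintro v ⟨j, hj, rfl⟩; exact hSc j hj)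
      exact sub_eq_zero.mp this
end

section
/- Let F = {f_1,...,f_m} ⊂ ℝ^n with n ≥ 1. If the map x ↦ (|⟨x,f_1⟩|,...,|⟨x,f_m⟩|) is injective up to sign on ℝ^n, then m ≥ 2n - 1. -/
open scoped RealInnerProductSpace BigOperators

open Submodule in
lemma aux_orth {n m : ℕ} (f : Fin m → EuclideanSpace ℝ (Fin n))
    (T : Finset (Fin m)) (hT : T.card < n) :
    ∃ x : EuclideanSpace ℝ (Fin n), x ≠ 0 ∧ ∀ j ∈ T, ⟪f j, x⟫ = 0 := by
  classical
  set K : Submodule ℝ (EuclideanSpace ℝ (Fin n)) := span ℝ ((T.image f : Finset _) : Set _)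
  have hfin : Module.finrank ℝ K < n := by
    calc Module.finrank ℝ K ≤ (T.image f).card := finrank_span_finset_le_card _
    _ ≤ T.card := Finset.card_image_le
    _ < n := hT
  have hKtop : K ≠ ⊤ := by
    intro h
    rw [h] at hfin
    simp [finrank_top, finrank_euclideanSpace_fin] at hfin
  have hbot : Kᗮ ≠ ⊥ := fun hb => hKtop (Submodule.orthogonal_eq_bot_iff.mp hb)
  obtain ⟨x, hxK, hx0⟩ := Submodule.exists_mem_ne_zero_of_ne_bot hbot
  refine ⟨x, hx0, fun j hj => ?_⟩
  exact (Submodule.mem_orthogonal K x).mp hxK (f j)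
    (subset_span (by simp; exact ⟨j, hj, rfl⟩))

theorem stmt12 {n m : ℕ} (hn : 1 ≤ n) (f : Fin m → EuclideanSpace ℝ (Fin n))
    (hPR : ∀ x y : EuclideanSpace ℝ (Fin n),
      (∀ j, abs (⟪x, f j⟫) = abs (⟪y, f j⟫)) → x = y ∨ x = -y) :
    2 * n - 1 ≤ m := by
  by_contra hm
  push_neg at hm
  have hm' : m ≤ 2 * n - 2 := by omega
  -- first half: indices with value < n - 1
  classical
  set S : Finset (Fin m) := Finset.univ.filter (fun j => (j : ℕ) < n - 1) with hS
  clear_value S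
  have hScard : S.card < n := by
    have : S.card ≤ (Finset.range (n - 1)).card := by
      refine Finset.card_le_card_of_injOn (fun j : Fin m => (j : ℕ)) ?_ ?_
      · intro j hj
        simp [hS] at hj
        simpa using hj
      · intro a _ b _ h
        exact Fin.ext h
    simp at this
    omega
  have hSccard : Sᶜ.card < n := by
    have : Sᶜ.card ≤ (Finset.range (n - 1)).card := by
      refine Finset.card_le_card_of_injOn (fun j : Fin m => (j : ℕ) - (n - 1)) ?_ ?_
      · intro j hj
        simp [hS] at hj
        have hjm : (j : ℕ) < m := j.isLt
        simp
        omega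
      · intro a ha b hb h
        simp [hS] at ha hb
        have h' : (a : ℕ) - (n - 1) = (b : ℕ) - (n - 1) := h
        apply Fin.ext
        omega
    simp at this
    omega
  obtain ⟨x, hx0, hx⟩ := aux_orth f S hScard
  obtain ⟨y, hy0, hy⟩ := aux_orth f Sᶜ hSccard
  have key : ∀ j, |⟪x + y, f j⟫| = |⟪x - y, f j⟫| := by
    intro j
    by_cases hj : j ∈ S
    · have h1 : ⟪f j, x⟫ = 0 := hx j hj
      have h1' : ⟪x, f j⟫ = 0 := by rw [real_inner_comm]; exact h1
      rw [inner_add_left, inner_sub_left, h1']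
      simp [abs_neg]
    · have h1 : ⟪f j, y⟫ = 0 := hy j (Finset.mem_compl.mpr hj)
      have h1' : ⟪y, f j⟫ = 0 := by rw [real_inner_comm]; exact h1
      rw [inner_add_left, inner_sub_left, h1']
      simp
  rcases hPR (x + y) (x - y) key with h | h
  · apply hy0
    have h2 : y = -y := by
      have := add_left_cancel (h.trans (sub_eq_add_neg x y))
      exact this
    have h3 : (2:ℝ) • y = 0 := by
      rw [two_smul]; nth_rewrite 2 [h2]; exact add_neg_cancel y
    rcases smul_eq_zero.mp h3 with h4 | h4
    · norm_num at h4
    · exact h4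
  · apply hx0
    have h2 : x = -x := by
      have h' : x + y = y + -x := by rw [h, neg_sub, sub_eq_add_neg]
      have : y + x = y + -x := by rw [← h', add_comm]
      exact add_left_cancel this
    have h3 : (2:ℝ) • x = 0 := by
      rw [two_smul]; nth_rewrite 2 [h2]; exact add_neg_cancel x
    rcases smul_eq_zero.mp h3 with h4 | h4
    · norm_num at h4
    · exact h4
end

section
/- Let F = {f_1,...,f_{2n-1}} ⊂ ℝ^n (so m = 2n-1). Then F is phase retrievable (the map x ↦ (|⟨x,f_j⟩|)_j is injective up to sign) if and only if F is full spark, i.e., every subset of n vectors from F is linearly independent. -/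
open scoped RealInnerProductSpace BigOperators

lemma orth_span_mem {n : ℕ} {z : EuclideanSpace ℝ (Fin n)}
    {s : Set (EuclideanSpace ℝ (Fin n))} (h : ∀ v ∈ s, ⟪z, v⟫ = 0) :
    z ∈ (Submodule.span ℝ s)ᗮ := by
  rw [Submodule.mem_orthogonal']
  intro u hu
  induction hu using Submodule.span_induction with
  | mem v hv => exact h v hv
  | zero => simp
  | add a b _ _ ha hb => rw [inner_add_right, ha, hb, add_zero]
  | smul c a _ ha => rw [inner_smul_right, ha, mul_zero]

lemma zero_of_orth_indep {n m : ℕ} {f : Fin m → EuclideanSpace ℝ (Fin n)}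
    {T : Finset (Fin m)} (hcard : T.card = n)
    (hind : LinearIndependent ℝ (fun j : T => f ↑j))
    {z : EuclideanSpace ℝ (Fin n)} (hz : ∀ j ∈ T, ⟪z, f j⟫ = 0) : z = 0 := by
  have hspan : Submodule.span ℝ (Set.range (fun j : T => f ↑j)) = ⊤ :=
    hind.span_eq_top_of_card_eq_finrank' (by
      simp [Fintype.card_coe, hcard, finrank_euclideanSpace_fin])
  have hrange : Set.range (fun j : T => f ↑j) = f '' ↑T := by
    ext v; simp [Set.mem_image]
  have hmem : z ∈ (Submodule.span ℝ (f '' ↑T))ᗮ := by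
    apply orth_span_mem
    rintro v ⟨j, hj, rfl⟩
    exact hz j hj
  rw [← hrange, hspan, Submodule.top_orthogonal_eq_bot] at hmem
  simpa using hmem

lemma exists_orth_nonzero {n : ℕ} (hn : 1 ≤ n) {m : ℕ} (f : Fin m → EuclideanSpace ℝ (Fin n))
    (T : Finset (Fin m)) (hne : Submodule.span ℝ (f '' ↑T) ≠ ⊤) :
    ∃ u : EuclideanSpace ℝ (Fin n), u ≠ 0 ∧ ∀ j ∈ T, ⟪u, f j⟫ = 0 := by
  have hb : (Submodule.span ℝ (f '' ↑T))ᗮ ≠ ⊥ :=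
    fun h => hne (Submodule.orthogonal_eq_bot_iff.mp h)
  obtain ⟨u, hu, hu0⟩ := Submodule.exists_mem_ne_zero_of_ne_bot hb
  refine ⟨u, hu0, fun j hj => ?_⟩
  exact Submodule.inner_left_of_mem_orthogonal
    (Submodule.subset_span (Set.mem_image_of_mem f (Finset.mem_coe.2 hj))) hu

theorem stmt13 {n : ℕ} (hn : 1 ≤ n) (f : Fin (2 * n - 1) → EuclideanSpace ℝ (Fin n)) :
    (∀ x y : EuclideanSpace ℝ (Fin n),
        (∀ j, abs (⟪x, f j⟫) = abs (⟪y, f j⟫)) → x = y ∨ x = -y) ↔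
    (∀ S : Finset (Fin (2 * n - 1)), S.card = n →
        LinearIndependent ℝ (fun j : S => f ↑j)) := by
  constructor
  · -- PR → full spark
    intro hPR S hScard
    by_contra hdep
    -- span of f on S is not ⊤
    have hSne : Submodule.span ℝ (f '' ↑S) ≠ ⊤ := by
      intro htop
      apply hdep
      apply linearIndependent_of_top_le_span_of_card_eq_finrank
      · rw [show Set.range (fun j : S => f ↑j) = f '' ↑S by
          ext v; simp [Set.mem_image], htop]
      · simp [Fintype.card_coe, hScard, finrank_euclideanSpace_fin]
    obtain ⟨u, hu0, hu⟩ := exists_orth_nonzero hn f S hSne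
    -- complement has n - 1 elements, span not ⊤
    have hCcard : Sᶜ.card = n - 1 := by
      have := Finset.card_compl S
      rw [hScard] at this
      simp at this
      omega
    classical
    have hCne : Submodule.span ℝ (f '' ↑(Sᶜ)) ≠ ⊤ := by
      intro htop
      have h1 : Module.finrank ℝ (Submodule.span ℝ (f '' ↑(Sᶜ))) ≤ Sᶜ.card := by
        have h2 := finrank_span_finset_le_card (R := ℝ) (Sᶜ.image f)
        rw [Finset.coe_image] at h2
        exact h2.trans (Finset.card_image_le)
      rw [htop] at h1
      rw [finrank_top, finrank_euclideanSpace_fin, hCcard] at h1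
      omega
    obtain ⟨v, hv0, hv⟩ := exists_orth_nonzero hn f Sᶜ hCne
    have habs : ∀ j, |⟪u + v, f j⟫| = |⟪u - v, f j⟫| := by
      intro j
      by_cases hj : j ∈ S
      · rw [inner_add_left, inner_sub_left, hu j hj, zero_add, zero_sub, abs_neg]
      · rw [inner_add_left, inner_sub_left, hv j (Finset.mem_compl.2 hj), add_zero, sub_zero]
    rcases hPR (u + v) (u - v) habs with h | h
    · apply hv0
      have : v + v = 0 := by
        have := sub_eq_zero.2 h
        rw [show u + v - (u - v) = v + v by abel] at this
        exact this
      have h2 : (2 : ℝ) • v = 0 := by rw [two_smul]; exact this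
      simpa using (smul_eq_zero.1 h2).resolve_left (by norm_num)
    · apply hu0
      have : u + u = 0 := by
        have : u + v + (u - v) = 0 := by rw [h]; abel
        rw [show u + v + (u - v) = u + u by abel] at this
        exact this
      have h2 : (2 : ℝ) • u = 0 := by rw [two_smul]; exact this
      simpa using (smul_eq_zero.1 h2).resolve_left (by norm_num)
  · -- full spark → PR
    intro hFS x y hxy
    set S : Finset (Fin (2 * n - 1)) := Finset.univ.filter (fun j => ⟪x, f j⟫ = ⟪y, f j⟫) with hS
    have hcomp : S.card + Sᶜ.card = 2 * n - 1 := by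
      rw [Finset.card_add_card_compl]; simp
    have hkey : n ≤ S.card ∨ n ≤ Sᶜ.card := by omega
    rcases hkey with hk | hk
    · left
      obtain ⟨T, hTS, hTcard⟩ := Finset.exists_subset_card_eq hk
      have hz : ∀ j ∈ T, ⟪x - y, f j⟫ = 0 := by
        intro j hj
        have hjS : j ∈ S := hTS hj
        rw [hS, Finset.mem_filter] at hjS
        rw [inner_sub_left, hjS.2, sub_self]
      have := zero_of_orth_indep hTcard (hFS T hTcard) hz
      exact sub_eq_zero.1 this
    · right
      obtain ⟨T, hTS, hTcard⟩ := Finset.exists_subset_card_eq hk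
      have hz : ∀ j ∈ T, ⟪x + y, f j⟫ = 0 := by
        intro j hj
        have hjS : j ∈ Sᶜ := hTS hj
        rw [Finset.mem_compl, hS, Finset.mem_filter] at hjS
        have hne : ¬ ⟪x, f j⟫ = ⟪y, f j⟫ := fun h => hjS ⟨Finset.mem_univ _, h⟩
        have : ⟪x, f j⟫ = -⟪y, f j⟫ := by
          rcases abs_eq_abs.1 (hxy j) with h | h
          · exact absurd h hne
          · exact h
        rw [inner_add_left, this, neg_add_cancel]
      have := zero_of_orth_indep hTcard (hFS T hTcard) hz
      have : x = -y := by
        have h := this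
        rw [add_eq_zero_iff_eq_neg] at h
        exact h
      exact this
end

section
/- Let f_1,...,f_m ∈ ℝ^n. For each subset S of {1,...,m} let F_S be the matrix with columns (f_j)_{j∈S} and σ_n(F_S) its n-th singular value. Define Δ² = min over subsets S of (σ_n(F_S)² + σ_n(F_{S^c})²). Then for all x, y ∈ ℝ^n with w_1 = x+y, w_2 = x-y both nonzero: Σ_{j=1}^m min(|⟨f_j,w_1⟩|², |⟨f_j,w_2⟩|²) ≥ Δ² · min(‖w_1‖², ‖w_2‖²). -/
open scoped RealInnerProductSpace BigOperators

/-! Split the indices into the set `S` where `w₁ = x + y` realises the minimum and its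
complement. The sum of minima is then `∑_{S} |⟪f j, w₁⟫|² + ∑_{Sᶜ} |⟪f j, w₂⟫|²`, and the lower
frame bounds of the two subfamilies bound it below by
`A S ‖w₁‖² + A Sᶜ ‖w₂‖² ≥ (A S + A Sᶜ) min (‖w₁‖², ‖w₂‖²) ≥ Δ² min (‖w₁‖², ‖w₂‖²)`. -/

theorem Finset.sum_min_eq_sum_filter_le_add_sum_compl {ι M : Type*} [Fintype ι] [DecidableEq ι]
    [AddCommMonoid M] [LinearOrder M] (a b : ι → M) :
    ∑ j, min (a j) (b j) =
      ∑ j ∈ Finset.univ.filter (fun j => a j ≤ b j), a j +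
        ∑ j ∈ (Finset.univ.filter (fun j => a j ≤ b j))ᶜ, b j := by
  simp only [min_def, Finset.sum_ite, Finset.compl_filter]

theorem add_mul_min_le_add {a b p q : ℝ} (ha : 0 ≤ a) (hb : 0 ≤ b) :
    (a + b) * min p q ≤ a * p + b * q := by
  rw [add_mul]
  exact add_le_add (mul_le_mul_of_nonneg_left (min_le_left p q) ha)
    (mul_le_mul_of_nonneg_left (min_le_right p q) hb)

section FrameBound

variable {ι E : Type*} [NormedAddCommGroup E] [InnerProductSpace ℝ E] (f : ι → E) (S : Finset ι)
  {a : ℝ}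

theorem IsGreatest.lowerFrameBound_nonneg
    (h : IsGreatest {a : ℝ | ∀ u : E, a * ‖u‖ ^ 2 ≤ ∑ j ∈ S, |⟪u, f j⟫| ^ 2} a) : 0 ≤ a :=
  h.2 fun u => by simpa using Finset.sum_nonneg fun j _ => sq_nonneg |⟪u, f j⟫|

theorem IsGreatest.lowerFrameBound_mul_norm_sq_le
    (h : IsGreatest {a : ℝ | ∀ u : E, a * ‖u‖ ^ 2 ≤ ∑ j ∈ S, |⟪u, f j⟫| ^ 2} a) (w : E) :
    a * ‖w‖ ^ 2 ≤ ∑ j ∈ S, |⟪f j, w⟫| ^ 2 := by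
  simpa only [real_inner_comm] using h.1 w

end FrameBound

theorem stmt14_general {n m : ℕ} (f : Fin m → EuclideanSpace ℝ (Fin n))
    (A : Finset (Fin m) → ℝ)
    (hA : ∀ S : Finset (Fin m),
      IsGreatest {a : ℝ | ∀ u : EuclideanSpace ℝ (Fin n),
        a * ‖u‖ ^ 2 ≤ ∑ j ∈ S, abs (⟪u, f j⟫) ^ 2} (A S))
    (Δsq : ℝ)
    (hΔ : IsLeast {t : ℝ | ∃ S : Finset (Fin m), t = A S + A Sᶜ} Δsq)
    (x y : EuclideanSpace ℝ (Fin n)) :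
    Δsq * min (‖x + y‖ ^ 2) (‖x - y‖ ^ 2) ≤
      ∑ j, min (abs (⟪f j, x + y⟫) ^ 2) (abs (⟪f j, x - y⟫) ^ 2) := by
  rw [Finset.sum_min_eq_sum_filter_le_add_sum_compl]
  set S := Finset.univ.filter fun j => |⟪f j, x + y⟫| ^ 2 ≤ |⟪f j, x - y⟫| ^ 2
  calc Δsq * min (‖x + y‖ ^ 2) (‖x - y‖ ^ 2)
      ≤ (A S + A Sᶜ) * min (‖x + y‖ ^ 2) (‖x - y‖ ^ 2) :=
        mul_le_mul_of_nonneg_right (hΔ.2 ⟨S, rfl⟩) (by positivity)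
    _ ≤ A S * ‖x + y‖ ^ 2 + A Sᶜ * ‖x - y‖ ^ 2 :=
        add_mul_min_le_add (hA S).lowerFrameBound_nonneg (hA Sᶜ).lowerFrameBound_nonneg
    _ ≤ _ := add_le_add ((hA S).lowerFrameBound_mul_norm_sq_le _ _ _)
        ((hA Sᶜ).lowerFrameBound_mul_norm_sq_le _ _ _)

theorem stmt14 {n m : ℕ} (f : Fin m → EuclideanSpace ℝ (Fin n))
    (A : Finset (Fin m) → ℝ)
    (hA : ∀ S : Finset (Fin m),
      IsGreatest {a : ℝ | ∀ u : EuclideanSpace ℝ (Fin n),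
        a * ‖u‖ ^ 2 ≤ ∑ j ∈ S, abs (⟪u, f j⟫) ^ 2} (A S))
    (Δsq : ℝ)
    (hΔ : IsLeast {t : ℝ | ∃ S : Finset (Fin m), t = A S + A Sᶜ} Δsq)
    (x y : EuclideanSpace ℝ (Fin n)) (h₁ : x + y ≠ 0) (h₂ : x - y ≠ 0) :
    Δsq * min (‖x + y‖ ^ 2) (‖x - y‖ ^ 2) ≤
      ∑ j, min (abs (⟪f j, x + y⟫) ^ 2) (abs (⟪f j, x - y⟫) ^ 2) :=
  stmt14_general f A hA Δsq hΔ x y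
end

section
/- Let f_1,...,f_m ∈ ℝ^n, and let α(x) = (|⟨x,f_j⟩|)_{j=1}^m, d(x,y) = min(‖x-y‖,‖x+y‖). Suppose S ⊆ {1,...,m} and u, v ∈ ℝ^n are unit vectors with Σ_{j∈S}|⟨u,f_j⟩|² + Σ_{j∉S}|⟨v,f_j⟩|² = Δ². Then for x = u+v and y = u-v one has ‖α(x) - α(y)‖² ≤ 4Δ² and d(x,y) = 2, hence ‖α(x)-α(y)‖/d(x,y) ≤ Δ. -/
/-! A coordinate of `α(u + v) - α(u - v)` is `|a + b| - |a - b|` with `a = ⟪u, f j⟫`,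
`b = ⟪v, f j⟫`, and by the reverse triangle inequality it is at most `2|b|` and at most `2|a|`
in absolute value. Using the first bound for `j ∈ S` and the second for `j ∉ S` gives
`‖α(u + v) - α(u - v)‖² ≤ 4Δ²`, while `(u + v) ∓ (u - v)` is `2v` or `2u`, both of norm `2`. -/

open scoped RealInnerProductSpace BigOperators

section AbsAddSubAbsSub

variable {R : Type*} [CommRing R] [LinearOrder R] [IsStrictOrderedRing R]

lemma sq_abs_add_sub_abs_sub_le_right (a b : R) : (|a + b| - |a - b|) ^ 2 ≤ (2 * b) ^ 2 :=
  sq_le_sq.mpr <| (abs_abs_sub_abs_le _ _).trans_eq <| by rw [add_sub_sub_cancel, two_mul]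

lemma sq_abs_add_sub_abs_sub_le_left (a b : R) : (|a + b| - |a - b|) ^ 2 ≤ (2 * a) ^ 2 := by
  simpa only [add_comm b a, abs_sub_comm b a] using sq_abs_add_sub_abs_sub_le_right b a

end AbsAddSubAbsSub

lemma norm_sq_sub_abs_inner_le {ι E : Type*} [Fintype ι] [DecidableEq ι]
    [NormedAddCommGroup E] [InnerProductSpace ℝ E] (f : ι → E)
    (α : E → EuclideanSpace ℝ ι) (hα : ∀ z j, α z j = |⟪z, f j⟫|) (S : Finset ι) (u v : E) :
    ‖α (u + v) - α (u - v)‖ ^ 2 ≤ 4 * (∑ j ∈ S, ⟪u, f j⟫ ^ 2 + ∑ j ∈ Sᶜ, ⟪v, f j⟫ ^ 2) := by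
  have hcoord : ∀ j, ‖(α (u + v) - α (u - v)) j‖ ^ 2
      = (|⟪u, f j⟫ + ⟪v, f j⟫| - |⟪u, f j⟫ - ⟪v, f j⟫|) ^ 2 := fun j => by
    rw [PiLp.sub_apply, hα, hα, Real.norm_eq_abs, sq_abs, inner_add_left, inner_sub_left]
  rw [EuclideanSpace.norm_sq_eq, ← Finset.sum_add_sum_compl S, mul_add, Finset.mul_sum,
    Finset.mul_sum]
  gcongr with j _ j _
  · exact (hcoord j).trans_le <| (sq_abs_add_sub_abs_sub_le_left _ _).trans_eq (by ring)
  · exact (hcoord j).trans_le <| (sq_abs_add_sub_abs_sub_le_right _ _).trans_eq (by ring)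

lemma min_norm_add_sub_sub_norm_add_add_sub {E : Type*} [NormedAddCommGroup E] [NormedSpace ℝ E]
    (u v : E) : min ‖(u + v) - (u - v)‖ ‖(u + v) + (u - v)‖ = 2 * min ‖v‖ ‖u‖ := by
  have hsub : (u + v) - (u - v) = (2 : ℝ) • v := by module
  have hadd : (u + v) + (u - v) = (2 : ℝ) • u := by module
  rw [hsub, hadd, norm_smul, norm_smul, Real.norm_two, mul_min_of_nonneg _ _ zero_le_two]

theorem stmt15 {n m : ℕ} (f : Fin m → EuclideanSpace ℝ (Fin n))
    (α : EuclideanSpace ℝ (Fin n) → EuclideanSpace ℝ (Fin m))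
    (hα : ∀ z j, α z j = abs (⟪z, f j⟫))
    (S : Finset (Fin m)) (u v : EuclideanSpace ℝ (Fin n))
    (hu : ‖u‖ = 1) (hv : ‖v‖ = 1)
    (Δ : ℝ) (hΔ : 0 ≤ Δ)
    (h : ∑ j ∈ S, abs (⟪u, f j⟫) ^ 2 + ∑ j ∈ Sᶜ, abs (⟪v, f j⟫) ^ 2 = Δ ^ 2) :
    ‖α (u + v) - α (u - v)‖ ^ 2 ≤ 4 * Δ ^ 2 ∧
    min ‖(u + v) - (u - v)‖ ‖(u + v) + (u - v)‖ = 2 ∧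
    ‖α (u + v) - α (u - v)‖ / min ‖(u + v) - (u - v)‖ ‖(u + v) + (u - v)‖ ≤ Δ := by
  simp only [sq_abs] at h
  have hsq : ‖α (u + v) - α (u - v)‖ ^ 2 ≤ 4 * Δ ^ 2 :=
    h ▸ norm_sq_sub_abs_inner_le f α hα S u v
  have hd : min ‖(u + v) - (u - v)‖ ‖(u + v) + (u - v)‖ = 2 := by
    rw [min_norm_add_sub_sub_norm_add_add_sub, hu, hv, min_self, mul_one]
  refine ⟨hsq, hd, ?_⟩
  rw [hd, div_le_iff₀ zero_lt_two, mul_comm, ← pow_le_pow_iff_left₀ (norm_nonneg _)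
    (by positivity) two_ne_zero, mul_pow]
  linarith
end

section
/- Let f_1,...,f_m ∈ ℝ^n with a_0 = min over unit x,y of Σ_j |⟨x,f_j⟩|²|⟨y,f_j⟩|² and Λ⁴ = max over unit x of Σ_j |⟨x,f_j⟩|⁴. For x,y ∈ ℝ^n let d_1(x,y) = ‖xxᵀ - yyᵀ‖_1 (nuclear norm). Then for all x, y: √a_0 · d_1(x,y) ≤ (Σ_{j=1}^m (|⟨f_j,x⟩|² - |⟨f_j,y⟩|²)²)^{1/2} ≤ Λ² · d_1(x,y). -/
/-!
Put `u = x - y` and `v = x + y`. The matrix `xxᵀ - yyᵀ` has rank at most two, so its nonzero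
eigenvalues `λ, μ` are determined by `λ + μ = ‖x‖² - ‖y‖²` and
`λ² + μ² = ‖x‖⁴ + ‖y‖⁴ - 2⟨x, y⟩²`; Cauchy–Schwarz forces `λμ ≤ 0`, whence
`(|λ| + |μ|)² = 2(λ² + μ²) - (λ + μ)² = ‖u‖²‖v‖²`. On the other side
`|⟨f, x⟩|² - |⟨f, y⟩|² = ⟨u, f⟩⟨v, f⟩`. Normalising `u` and `v` in the definition of `a₀` gives
the lower bound; Cauchy–Schwarz over `j`, followed by the definition of `Λ` applied to `u` and
to `v`, gives the upper bound.
-/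

open scoped Matrix
open Matrix Finset

section DotProduct

variable {ι R : Type*} [Fintype ι]

theorem dotProduct_self_nonneg [Ring R] [LinearOrder R] [IsStrictOrderedRing R] (x : ι → R) :
    0 ≤ x ⬝ᵥ x :=
  sum_nonneg fun i _ => mul_self_nonneg (x i)

theorem dotProduct_self_pos [Ring R] [LinearOrder R] [IsStrictOrderedRing R] {x : ι → R}
    (hx : x ≠ 0) : 0 < x ⬝ᵥ x :=
  (dotProduct_self_nonneg x).lt_of_ne' (dotProduct_self_eq_zero.not.mpr hx)

theorem sq_dotProduct_le_mul [CommRing R] [LinearOrder R] [IsStrictOrderedRing R]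
    (x y : ι → R) : (x ⬝ᵥ y) ^ 2 ≤ (x ⬝ᵥ x) * (y ⬝ᵥ y) := by
  simpa only [dotProduct, sq] using sum_mul_sq_le_sq_mul_sq univ x y

theorem sum_sq_inv_sqrt_smul_eq_one {w : ι → ℝ} (hw : w ≠ 0) :
    ∑ i, ((√(w ⬝ᵥ w))⁻¹ • w) i ^ 2 = 1 := by
  have hpos := dotProduct_self_pos hw
  simp only [Pi.smul_apply, smul_eq_mul, mul_pow, ← mul_sum, inv_pow, Real.sq_sqrt hpos.le]
  rw [← inv_mul_cancel₀ hpos.ne']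
  simp [dotProduct, sq]

theorem sq_abs_dotProduct_sub_sq_abs_dotProduct (g x y : ι → ℝ) :
    |g ⬝ᵥ x| ^ 2 - |g ⬝ᵥ y| ^ 2 = ((x - y) ⬝ᵥ g) * ((x + y) ⬝ᵥ g) := by
  simp only [sq_abs, sub_dotProduct, add_dotProduct, dotProduct_comm g]
  ring

end DotProduct

theorem sq_sum_abs_eq_of_card_ne_zero_le_two {ι : Type*} [Fintype ι] (e : ι → ℝ)
    (hcard : #{i | e i ≠ 0} ≤ 2) (hsq : (∑ i, e i) ^ 2 ≤ ∑ i, e i ^ 2) :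
    (∑ i, |e i|) ^ 2 = 2 * ∑ i, e i ^ 2 - (∑ i, e i) ^ 2 := by
  classical
  set S : Finset ι := {i | e i ≠ 0}
  have hsupp (g : ℝ → ℝ) (hg : g 0 = 0) : ∑ i, g (e i) = ∑ i ∈ S, g (e i) :=
    (sum_filter_of_ne (p := (e · ≠ 0)) fun i _ h he => h (by rw [he, hg])).symm
  have hsum : ∑ i, e i = ∑ i ∈ S, e i := hsupp id rfl
  have hsum_sq : ∑ i, e i ^ 2 = ∑ i ∈ S, e i ^ 2 := hsupp (· ^ 2) (zero_pow two_ne_zero)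
  have hsum_abs : ∑ i, |e i| = ∑ i ∈ S, |e i| := hsupp abs abs_zero
  rw [hsum, hsum_sq] at hsq ⊢
  rw [hsum_abs]
  clear_value S
  obtain hS | hS | hS : #S = 0 ∨ #S = 1 ∨ #S = 2 := by omega
  · simp [card_eq_zero.mp hS]
  · obtain ⟨a, rfl⟩ := card_eq_one.mp hS
    simp only [sum_singleton, sq_abs]
    ring
  · obtain ⟨a, b, hab, rfl⟩ := card_eq_two.mp hS
    simp only [sum_pair hab] at hsq ⊢
    -- `hsq` says `e a * e b ≤ 0`, so `|e a| + |e b| = |e a - e b|`.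
    have hab : |e a| * |e b| = -(e a * e b) := by
      rw [← abs_mul, abs_of_nonpos (by nlinarith)]
    nlinarith [sq_abs (e a), sq_abs (e b)]

namespace Matrix

variable {m n K : Type*} [Fintype n] [Field K]

theorem rank_add_le (A B : Matrix m n K) : (A + B).rank ≤ A.rank + B.rank := by
  unfold rank
  rw [mulVecLin_add]
  exact (Submodule.finrank_mono (LinearMap.range_add_le _ _)).trans
    (Submodule.finrank_add_le_finrank_add_finrank _ _)

theorem rank_vecMulVec_sub_vecMulVec_le (x y : n → K) :
    (vecMulVec x x - vecMulVec y y).rank ≤ 2 := by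
  rw [sub_eq_add_neg, ← neg_vecMulVec]
  exact (rank_add_le _ _).trans (add_le_add (rank_vecMulVec_le _ _) (rank_vecMulVec_le _ _))

theorem trace_vecMulVec_mul_vecMulVec (a b c d : n → K) :
    (vecMulVec a b * vecMulVec c d).trace = (b ⬝ᵥ c) * (d ⬝ᵥ a) := by
  rw [vecMulVec_mul_vecMulVec, trace_vecMulVec, dotProduct_smul, smul_eq_mul, dotProduct_comm a]

theorem IsHermitian.trace_mul_self_eq_sum_sq_eigenvalues {𝕜 : Type*} [RCLike 𝕜] [DecidableEq n]
    {A : Matrix n n 𝕜} (hA : A.IsHermitian) :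
    (A * A).trace = ∑ i, (hA.eigenvalues i : 𝕜) ^ 2 := by
  conv_lhs => rw [hA.spectral_theorem, ← map_mul, Unitary.conjStarAlgAut_apply, trace_mul_cycle,
    Unitary.coe_star_mul_self, one_mul, diagonal_mul_diagonal, trace_diagonal]
  simp [sq]

theorem IsHermitian.sum_abs_eigenvalues_vecMulVec_sub_vecMulVec [DecidableEq n] {x y : n → ℝ}
    (hX : (vecMulVec x x - vecMulVec y y).IsHermitian) :
    ∑ i, |hX.eigenvalues i| = √((x - y) ⬝ᵥ (x - y)) * √((x + y) ⬝ᵥ (x + y)) := by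
  set e := hX.eigenvalues
  have htrace : ∑ i, e i = x ⬝ᵥ x - y ⬝ᵥ y := by
    simpa [trace_sub, trace_vecMulVec] using hX.trace_eq_sum_eigenvalues.symm
  have htrace_sq : ∑ i, e i ^ 2 = (x ⬝ᵥ x) ^ 2 + (y ⬝ᵥ y) ^ 2 - 2 * (x ⬝ᵥ y) ^ 2 := by
    have := hX.trace_mul_self_eq_sum_sq_eigenvalues
    simp only [sub_mul, mul_sub, trace_sub, trace_vecMulVec_mul_vecMulVec,
      RCLike.ofReal_real_eq_id, id] at this
    rw [← this, dotProduct_comm y x]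
    ring
  have hcard : #{i | e i ≠ 0} ≤ 2 := by
    rw [← Fintype.card_subtype, ← hX.rank_eq_card_non_zero_eigs]
    exact rank_vecMulVec_sub_vecMulVec_le x y
  have hsq : (∑ i, e i) ^ 2 ≤ ∑ i, e i ^ 2 := by
    rw [htrace, htrace_sq]
    nlinarith [sq_dotProduct_le_mul x y]
  rw [← Real.sqrt_mul (dotProduct_self_nonneg _),
    ← Real.sqrt_sq (sum_nonneg fun i _ => abs_nonneg (e i)),
    sq_sum_abs_eq_of_card_ne_zero_le_two e hcard hsq, htrace, htrace_sq]
  congr 1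
  simp only [sub_dotProduct, dotProduct_sub, add_dotProduct, dotProduct_add, dotProduct_comm y x]
  ring

end Matrix

section Frame

variable {ι κ : Type*} [Fintype ι] [Fintype κ] (f : κ → ι → ℝ)

theorem mul_dotProduct_self_mul_le_of_mem_lowerBounds {a : ℝ}
    (ha : a ∈ lowerBounds {s : ℝ | ∃ x y : ι → ℝ, (∑ i, x i ^ 2) = 1 ∧ (∑ i, y i ^ 2) = 1 ∧
      s = ∑ j, |x ⬝ᵥ f j| ^ 2 * |y ⬝ᵥ f j| ^ 2}) (u v : ι → ℝ) :
    a * ((u ⬝ᵥ u) * (v ⬝ᵥ v)) ≤ ∑ j, (u ⬝ᵥ f j) ^ 2 * (v ⬝ᵥ f j) ^ 2 := by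
  rcases eq_or_ne u 0 with rfl | hu
  · simp
  rcases eq_or_ne v 0 with rfl | hv
  · simp
  have hu' := dotProduct_self_pos hu
  have hv' := dotProduct_self_pos hv
  have hmem := ha ⟨_, _, sum_sq_inv_sqrt_smul_eq_one hu, sum_sq_inv_sqrt_smul_eq_one hv, rfl⟩
  simp only [smul_dotProduct, smul_eq_mul, abs_mul, mul_pow, sq_abs, inv_pow,
    Real.sq_sqrt hu'.le, Real.sq_sqrt hv'.le] at hmem
  rw [← le_div_iff₀ (by positivity)]
  refine hmem.trans_eq ?_
  rw [div_eq_mul_inv, sum_mul]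
  exact sum_congr rfl fun j _ => by ring

theorem sum_dotProduct_pow_four_le_of_mem_upperBounds {L : ℝ}
    (hL : L ∈ upperBounds {t : ℝ | ∃ x : ι → ℝ, (∑ i, x i ^ 2) = 1 ∧
      t = ∑ j, |x ⬝ᵥ f j| ^ 4}) (w : ι → ℝ) :
    ∑ j, (w ⬝ᵥ f j) ^ 4 ≤ L * (w ⬝ᵥ w) ^ 2 := by
  rcases eq_or_ne w 0 with rfl | hw
  · simp
  have hw' := dotProduct_self_pos hw
  have hmem := hL ⟨_, sum_sq_inv_sqrt_smul_eq_one hw, rfl⟩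
  have h4 : (√(w ⬝ᵥ w))⁻¹ ^ 4 = ((w ⬝ᵥ w) ^ 2)⁻¹ := by
    rw [show 4 = 2 * 2 from rfl, pow_mul, inv_pow, Real.sq_sqrt hw'.le, inv_pow]
  simp only [smul_dotProduct, smul_eq_mul, abs_mul, mul_pow, h4,
    (Even.pow_abs ⟨2, rfl⟩ : ∀ t : ℝ, |t| ^ 4 = t ^ 4)] at hmem
  rw [← div_le_iff₀ (by positivity), div_eq_inv_mul, mul_sum]
  exact hmem

theorem sum_sq_mul_sq_dotProduct_le_of_mem_upperBounds {L : ℝ} (hL0 : 0 ≤ L)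
    (hL : L ∈ upperBounds {t : ℝ | ∃ x : ι → ℝ, (∑ i, x i ^ 2) = 1 ∧
      t = ∑ j, |x ⬝ᵥ f j| ^ 4}) (u v : ι → ℝ) :
    ∑ j, (u ⬝ᵥ f j) ^ 2 * (v ⬝ᵥ f j) ^ 2 ≤ L * ((u ⬝ᵥ u) * (v ⬝ᵥ v)) := by
  have hu := dotProduct_self_nonneg u
  have hv := dotProduct_self_nonneg v
  refine (pow_le_pow_iff_left₀ (sum_nonneg fun j _ => by positivity) (by positivity)
    two_ne_zero).mp ?_
  calc (∑ j, (u ⬝ᵥ f j) ^ 2 * (v ⬝ᵥ f j) ^ 2) ^ 2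
      ≤ (∑ j, ((u ⬝ᵥ f j) ^ 2) ^ 2) * ∑ j, ((v ⬝ᵥ f j) ^ 2) ^ 2 :=
        sum_mul_sq_le_sq_mul_sq _ _ _
    _ = (∑ j, (u ⬝ᵥ f j) ^ 4) * ∑ j, (v ⬝ᵥ f j) ^ 4 := by simp only [← pow_mul]
    _ ≤ (L * (u ⬝ᵥ u) ^ 2) * (L * (v ⬝ᵥ v) ^ 2) :=
        mul_le_mul (sum_dotProduct_pow_four_le_of_mem_upperBounds f hL u)
          (sum_dotProduct_pow_four_le_of_mem_upperBounds f hL v)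
          (sum_nonneg fun j _ => by positivity) (by positivity)
    _ = (L * ((u ⬝ᵥ u) * (v ⬝ᵥ v))) ^ 2 := by ring

end Frame

theorem stmt17_general {n m : ℕ} (f : Fin m → (Fin n → ℝ)) (a₀ Λ : ℝ)
    (ha₀ : IsLeast {s : ℝ | ∃ x y : Fin n → ℝ, (∑ i, x i ^ 2) = 1 ∧ (∑ i, y i ^ 2) = 1 ∧
      s = ∑ j, abs (x ⬝ᵥ f j) ^ 2 * abs (y ⬝ᵥ f j) ^ 2} a₀)
    (hΛ : IsGreatest {t : ℝ | ∃ x : Fin n → ℝ, (∑ i, x i ^ 2) = 1 ∧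
      t = ∑ j, abs (x ⬝ᵥ f j) ^ 4} (Λ ^ 4))
    (x y : Fin n → ℝ)
    (X : Matrix (Fin n) (Fin n) ℝ)
    (hXdef : X = Matrix.vecMulVec x x - Matrix.vecMulVec y y)
    (hX : X.IsHermitian)
    (d₁ : ℝ) (hd₁ : d₁ = ∑ i, abs (hX.eigenvalues i)) :
    Real.sqrt a₀ * d₁ ≤ Real.sqrt (∑ j, (abs (f j ⬝ᵥ x) ^ 2 - abs (f j ⬝ᵥ y) ^ 2) ^ 2) ∧
    Real.sqrt (∑ j, (abs (f j ⬝ᵥ x) ^ 2 - abs (f j ⬝ᵥ y) ^ 2) ^ 2) ≤ Λ ^ 2 * d₁ := by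
  subst hXdef hd₁
  set u := x - y
  set v := x + y
  have hmiddle : ∑ j, (|f j ⬝ᵥ x| ^ 2 - |f j ⬝ᵥ y| ^ 2) ^ 2
      = ∑ j, (u ⬝ᵥ f j) ^ 2 * (v ⬝ᵥ f j) ^ 2 :=
    sum_congr rfl fun j _ => by rw [sq_abs_dotProduct_sub_sq_abs_dotProduct, mul_pow]
  have huv : 0 ≤ (u ⬝ᵥ u) * (v ⬝ᵥ v) :=
    mul_nonneg (dotProduct_self_nonneg u) (dotProduct_self_nonneg v)
  rw [hX.sum_abs_eigenvalues_vecMulVec_sub_vecMulVec, ← Real.sqrt_mul (dotProduct_self_nonneg u),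
    hmiddle]
  constructor
  · rw [← Real.sqrt_mul' _ huv]
    exact Real.sqrt_le_sqrt (mul_dotProduct_self_mul_le_of_mem_lowerBounds f ha₀.2 u v)
  · rw [← Real.sqrt_sq (sq_nonneg Λ), ← Real.sqrt_mul' _ huv, ← pow_mul]
    exact Real.sqrt_le_sqrt
      (sum_sq_mul_sq_dotProduct_le_of_mem_upperBounds f (by positivity) hΛ.2 u v)

theorem stmt17 {n m : ℕ} (f : Fin m → (Fin n → ℝ)) (a₀ Λ : ℝ) (hΛ0 : 0 ≤ Λ)
    (ha₀ : IsLeast {s : ℝ | ∃ x y : Fin n → ℝ, (∑ i, x i ^ 2) = 1 ∧ (∑ i, y i ^ 2) = 1 ∧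
      s = ∑ j, abs (x ⬝ᵥ f j) ^ 2 * abs (y ⬝ᵥ f j) ^ 2} a₀)
    (hΛ : IsGreatest {t : ℝ | ∃ x : Fin n → ℝ, (∑ i, x i ^ 2) = 1 ∧
      t = ∑ j, abs (x ⬝ᵥ f j) ^ 4} (Λ ^ 4))
    (x y : Fin n → ℝ)
    (X : Matrix (Fin n) (Fin n) ℝ)
    (hXdef : X = Matrix.vecMulVec x x - Matrix.vecMulVec y y)
    (hX : X.IsHermitian)
    (d₁ : ℝ) (hd₁ : d₁ = ∑ i, abs (hX.eigenvalues i)) :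
    Real.sqrt a₀ * d₁ ≤ Real.sqrt (∑ j, (abs (f j ⬝ᵥ x) ^ 2 - abs (f j ⬝ᵥ y) ^ 2) ^ 2) ∧
    Real.sqrt (∑ j, (abs (f j ⬝ᵥ x) ^ 2 - abs (f j ⬝ᵥ y) ^ 2) ^ 2) ≤ Λ ^ 2 * d₁ :=
  stmt17_general f a₀ Λ ha₀ hΛ x y X hXdef hX d₁ hd₁
end

section
/- Let f_1,...,f_{n+1} ∈ ℝ^n with ‖f_j‖ ≤ L for all j. Then there exists a subset S ⊆ {1,...,n+1} with |S| = n such that σ_n(F_S) ≤ L/√n, where F_S is the matrix with columns (f_j)_{j∈S} and σ_n denotes the smallest (n-th) singular value. -/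
open scoped BigOperators

theorem stmt18 {n : ℕ} (hn : 0 < n) (L : ℝ) (f : Fin (n + 1) → (Fin n → ℝ))
    (hL : ∀ j, Real.sqrt (∑ i, f j i ^ 2) ≤ L) :
    ∃ S : Finset (Fin (n + 1)), S.card = n ∧
      ∃ v : S → ℝ, Real.sqrt (∑ j, v j ^ 2) = 1 ∧
        Real.sqrt (∑ i, (∑ j : S, f ↑j i * v j) ^ 2) ≤ L / Real.sqrt n := by
  -- linear dependence
  have hdep : ¬ LinearIndependent ℝ f := by
    intro h
    have := h.fintype_card_le_finrank
    rw [Module.finrank_fin_fun, Fintype.card_fin] at this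
    omega
  obtain ⟨c, hsum, i0, hi0⟩ := Fintype.not_linearIndependent_iff.mp hdep
  -- pick j₀ minimizing |c j|
  obtain ⟨j0, -, hj0min⟩ := Finset.exists_min_image Finset.univ (fun j => |c j|)
    ⟨i0, Finset.mem_univ i0⟩
  have hj0min' : ∀ j, |c j0| ≤ |c j| := fun j => hj0min j (Finset.mem_univ j)
  set S : Finset (Fin (n + 1)) := Finset.univ.erase j0 with hS
  have hcard : S.card = n := by
    simp [hS, Finset.card_erase_of_mem]
  have hScard_pos : 0 < S.card := by rw [hcard]; exact hn
  set A : ℝ := ∑ j ∈ S, c j ^ 2 with hA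
  -- A > 0
  have hex : ∃ j ∈ S, c j ≠ 0 := by
    by_cases h : i0 = j0
    · rcases Finset.card_pos.mp hScard_pos with ⟨j1, hj1⟩
      refine ⟨j1, hj1, fun hc => ?_⟩
      have h2 := hj0min' j1
      rw [hc, abs_zero] at h2
      have h3 : c j0 = 0 := abs_nonpos_iff.mp h2
      exact hi0 (h ▸ h3)
    · exact ⟨i0, Finset.mem_erase.mpr ⟨h, Finset.mem_univ _⟩, hi0⟩
  have hApos : 0 < A := by
    obtain ⟨j1, hj1, hj1ne⟩ := hex
    have h1 : 0 < c j1 ^ 2 := by positivity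
    exact lt_of_lt_of_le h1 (Finset.single_le_sum (f := fun j => c j ^ 2)
      (fun j _ => sq_nonneg _) hj1)
  -- relation: ∑ j in S, c j * f j i = - (c j0 * f j0 i)
  have hrel : ∀ i, ∑ j ∈ S, c j * f j i = - (c j0 * f j0 i) := by
    intro i
    have h := congrFun hsum i
    simp only [Finset.sum_apply, Pi.smul_apply, smul_eq_mul, Pi.zero_apply] at h
    have h2 : ∑ j ∈ S, c j * f j i + c j0 * f j0 i = 0 := by
      rw [← h, hS, Finset.sum_erase_add _ _ (Finset.mem_univ j0)]
    linarith
  refine ⟨S, hcard, fun j => c ↑j / Real.sqrt A, ?_, ?_⟩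
  · have h1 : ∑ j : S, (c ↑j / Real.sqrt A) ^ 2 = ∑ j ∈ S, (c j / Real.sqrt A) ^ 2 :=
      Finset.sum_coe_sort S (fun j => (c j / Real.sqrt A) ^ 2)
    have h2 : ∑ j ∈ S, (c j / Real.sqrt A) ^ 2 = A / A := by
      rw [Finset.sum_div]
      refine Finset.sum_congr rfl fun j _ => ?_
      rw [div_pow, Real.sq_sqrt hApos.le]
    rw [h1, h2, div_self hApos.ne', Real.sqrt_one]
  · have hcol : ∀ i, ∑ j : S, f ↑j i * (c ↑j / Real.sqrt A)
        = - (c j0 * f j0 i) / Real.sqrt A := by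
      intro i
      have h1 : ∑ j : S, f ↑j i * (c ↑j / Real.sqrt A)
          = ∑ j ∈ S, f j i * (c j / Real.sqrt A) :=
        Finset.sum_coe_sort S (fun j => f j i * (c j / Real.sqrt A))
      have h2 : ∑ j ∈ S, f j i * (c j / Real.sqrt A)
          = (∑ j ∈ S, c j * f j i) / Real.sqrt A := by
        rw [Finset.sum_div]
        exact Finset.sum_congr rfl fun j _ => by ring
      rw [h1, h2, hrel i]
    have hsum2 : ∑ i, (∑ j : S, f ↑j i * (c ↑j / Real.sqrt A)) ^ 2
        = (c j0 ^ 2 / A) * ∑ i, f j0 i ^ 2 := by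
      rw [Finset.mul_sum]
      refine Finset.sum_congr rfl fun i _ => ?_
      rw [hcol i, div_pow, neg_pow, Real.sq_sqrt hApos.le]
      ring
    rw [hsum2, Real.sqrt_mul (by positivity)]
    have hfL : Real.sqrt (∑ i, f j0 i ^ 2) ≤ L := hL j0
    have hL0 : 0 ≤ L := le_trans (Real.sqrt_nonneg _) hfL
    have hnpos : (0 : ℝ) < n := by exact_mod_cast hn
    have hle : c j0 ^ 2 / A ≤ 1 / n := by
      rw [div_le_div_iff₀ hApos hnpos, one_mul]
      calc c j0 ^ 2 * n = ∑ _j ∈ S, c j0 ^ 2 := by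
            rw [Finset.sum_const, hcard, nsmul_eq_mul]; ring
        _ ≤ A := Finset.sum_le_sum fun j _ => by
            have h := hj0min' j
            calc c j0 ^ 2 = |c j0| ^ 2 := (sq_abs _).symm
              _ ≤ |c j| ^ 2 := pow_le_pow_left₀ (abs_nonneg _) h 2
              _ = c j ^ 2 := sq_abs _
    calc Real.sqrt (c j0 ^ 2 / A) * Real.sqrt (∑ i, f j0 i ^ 2)
        ≤ Real.sqrt (1 / n) * L :=
          mul_le_mul (Real.sqrt_le_sqrt hle) hfL (Real.sqrt_nonneg _) (Real.sqrt_nonneg _)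
      _ = L / Real.sqrt n := by
          rw [one_div, Real.sqrt_inv, inv_mul_eq_div]
end

section
/- Let f_1,...,f_m ∈ ℝ^n, α(x) = (|⟨x,f_j⟩|)_j, and let A > 0 satisfy A‖x‖² ≤ Σ_j |⟨x,f_j⟩|² for all x. Fix x ∈ ℝ^n and suppose w_1 ∈ ℝ^n satisfies ‖w_1‖ · max_j ‖f_j‖ ≤ |⟨f_j, x⟩| for every j with ⟨f_j, x⟩ ≠ 0 [i.e., ‖w_1‖ ≤ ε_0(x) := min_{⟨f_k,x⟩≠0} |⟨f_k,x⟩| / max_k ‖f_k‖]. Then with y = x - w_1, ‖α(x) - α(y)‖² = Σ_{j=1}^m |⟨f_j, w_1⟩|², and consequently ‖α(x) - α(y)‖ ≥ √A · ‖w_1‖. -/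
open scoped RealInnerProductSpace BigOperators

lemma key_abs_sq (a c : ℝ) (h : a = 0 ∨ |c| ≤ |a|) : (|a| - |a - c|) ^ 2 = c ^ 2 := by
  rcases h with h | h
  · subst h; simp [abs_sub_comm, sq_abs]
  · have h1 : 0 ≤ a * (a - c) := by
      nlinarith [le_abs_self (a * c), abs_mul a c, sq_abs a, sq_abs c, abs_nonneg a, abs_nonneg c]
    have h2 : |a| * |a - c| = a * (a - c) := by rw [← abs_mul]; exact abs_of_nonneg h1
    nlinarith [sq_abs a, sq_abs (a - c)]

theorem stmt19 {n m : ℕ} (f : Fin m → EuclideanSpace ℝ (Fin n))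
    (A L : ℝ) (hApos : 0 < A)
    (hframe : ∀ z : EuclideanSpace ℝ (Fin n), A * ‖z‖ ^ 2 ≤ ∑ j, abs (⟪z, f j⟫) ^ 2)
    (hL : ∀ j, ‖f j‖ ≤ L)
    (x w₁ : EuclideanSpace ℝ (Fin n))
    (hw : ∀ j, ⟪f j, x⟫ ≠ 0 → ‖w₁‖ * L ≤ abs (⟪f j, x⟫))
    (α : EuclideanSpace ℝ (Fin n) → EuclideanSpace ℝ (Fin m))
    (hα : ∀ z j, α z j = abs (⟪z, f j⟫)) :
    ‖α x - α (x - w₁)‖ ^ 2 = ∑ j, abs (⟪f j, w₁⟫) ^ 2 ∧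
    Real.sqrt A * ‖w₁‖ ≤ ‖α x - α (x - w₁)‖ := by
  have hsq : ∀ j, ((α x - α (x - w₁)) j) ^ 2 = |⟪f j, w₁⟫| ^ 2 := by
    intro j
    have hcomp : (α x - α (x - w₁)) j = |⟪x, f j⟫| - |⟪x, f j⟫ - ⟪w₁, f j⟫| := by
      simp [hα, inner_sub_left]
    have hyp : ⟪x, f j⟫ = 0 ∨ |⟪w₁, f j⟫| ≤ |⟪x, f j⟫| := by
      by_cases hz : ⟪f j, x⟫ = 0
      · left; rwa [real_inner_comm]
      · right
        have h1 : |⟪w₁, f j⟫| ≤ ‖w₁‖ * ‖f j‖ := abs_real_inner_le_norm _ _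
        have h2 : ‖w₁‖ * ‖f j‖ ≤ ‖w₁‖ * L :=
          mul_le_mul_of_nonneg_left (hL j) (norm_nonneg _)
        have h3 := hw j hz
        rw [real_inner_comm] at h3
        linarith
    rw [hcomp, key_abs_sq _ _ hyp, real_inner_comm, sq_abs]
  have hpart1 : ‖α x - α (x - w₁)‖ ^ 2 = ∑ j, |⟪f j, w₁⟫| ^ 2 := by
    rw [EuclideanSpace.norm_eq, Real.sq_sqrt (by positivity)]
    refine Finset.sum_congr rfl fun j _ => ?_
    rw [Real.norm_eq_abs, sq_abs, hsq j]
  refine ⟨hpart1, ?_⟩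
  have hA : A * ‖w₁‖ ^ 2 ≤ ‖α x - α (x - w₁)‖ ^ 2 := by
    rw [hpart1]
    calc A * ‖w₁‖ ^ 2 ≤ ∑ j, |⟪w₁, f j⟫| ^ 2 := hframe w₁
      _ = ∑ j, |⟪f j, w₁⟫| ^ 2 := by
          refine Finset.sum_congr rfl fun j _ => by rw [real_inner_comm]
  have h := Real.sqrt_le_sqrt hA
  rwa [Real.sqrt_mul hApos.le, Real.sqrt_sq (norm_nonneg _), Real.sqrt_sq (norm_nonneg _)] at h
end
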